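/- arXiv:1004.2529 — 4 statements merged into one kernel-verified Lean document; each statement's English description precedes it below -/
import Mathlib

section
/- The membership weights μ(A), μ(B), μ(A or B) of an item with respect to concepts A, B and their disjunction admit a classical representation (i.e., there exists a probability space (Ω, σ(Ω), P) and events E_A, E_B ∈ σ(Ω) with μ(A) = P(E_A), μ(B) = P(E_B), μ(A or B) = P(E_A ∪ E_B)) if and only if the inequalities 0 ≤ μ(A) ≤ μ(A or B) ≤ 1, 0 ≤ μ(B) ≤ μ(A or B) ≤ 1, and 0 ≤ μ(A) + μ(B) − μ(A or B) all hold. -/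
open MeasureTheory

def IsClassicalDisjunction (a b c : ℝ) : Prop :=
  ∃ (Ω : Type) (_ : MeasurableSpace Ω) (P : Measure Ω),
    IsProbabilityMeasure P ∧
    ∃ EA EB : Set Ω, MeasurableSet EA ∧ MeasurableSet EB ∧
      (P EA).toReal = a ∧ (P EB).toReal = b ∧ (P (EA ∪ EB)).toReal = c

theorem stmt0 (a b c : ℝ) :
    IsClassicalDisjunction a b c ↔
      (0 ≤ a ∧ a ≤ c ∧ c ≤ 1) ∧ (0 ≤ b ∧ b ≤ c ∧ c ≤ 1) ∧ 0 ≤ a + b - c := by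
  constructor
  · rintro ⟨Ω, mΩ, P, hP, EA, EB, hEA, hEB, ha, hb, hc⟩
    have hfin : ∀ s : Set Ω, P s ≠ ⊤ := fun s => measure_ne_top P s
    have h1 : P EA ≤ P (EA ∪ EB) := measure_mono Set.subset_union_left
    have h2 : P EB ≤ P (EA ∪ EB) := measure_mono Set.subset_union_right
    have h3 : P (EA ∪ EB) ≤ P EA + P EB := measure_union_le _ _
    have h4 : P (EA ∪ EB) ≤ 1 := prob_le_one
    subst ha hb hc
    refine ⟨⟨ENNReal.toReal_nonneg, ?_, ?_⟩, ⟨ENNReal.toReal_nonneg, ?_, ?_⟩, ?_⟩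
    · exact ENNReal.toReal_mono (hfin _) h1
    · simpa using ENNReal.toReal_mono (by simp) h4
    · exact ENNReal.toReal_mono (hfin _) h2
    · simpa using ENNReal.toReal_mono (by simp) h4
    · have h5 : P EA + P EB ≠ ⊤ := by
        simp [hfin]
      have := ENNReal.toReal_mono h5 h3
      rw [ENNReal.toReal_add (hfin _) (hfin _)] at this
      linarith
  · rintro ⟨⟨ha0, hac, hc1⟩, ⟨hb0, hbc, _⟩, habc⟩
    set P : Measure (Fin 4) :=
      ENNReal.ofReal (a + b - c) • Measure.dirac 0 +
      ENNReal.ofReal (c - b) • Measure.dirac 1 +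
      ENNReal.ofReal (c - a) • Measure.dirac 2 +
      ENNReal.ofReal (1 - c) • Measure.dirac 3 with hPdef
    have key : ∀ s : Set (Fin 4), ∀ x y z w : ENNReal,
        (Measure.dirac (0:Fin 4)) s = x → (Measure.dirac (1:Fin 4)) s = y →
        (Measure.dirac (2:Fin 4)) s = z → (Measure.dirac (3:Fin 4)) s = w →
        P s = ENNReal.ofReal (a + b - c) * x + ENNReal.ofReal (c - b) * y +
              ENNReal.ofReal (c - a) * z + ENNReal.ofReal (1 - c) * w := by
      intro s x y z w hx hy hz hw
      simp [hPdef, Measure.add_apply, Measure.smul_apply, smul_eq_mul, hx, hy, hz, hw]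
    have hcb : 0 ≤ c - b := by linarith
    have hca : 0 ≤ c - a := by linarith
    have h1c : 0 ≤ 1 - c := by linarith
    have hc0 : 0 ≤ c := le_trans ha0 hac
    have hPA : P {0, 1} = ENNReal.ofReal a := by
      rw [key {0,1} 1 1 0 0 (by simp) (by simp) (by simp) (by simp)]
      rw [mul_one, mul_one, mul_zero, mul_zero, add_zero, add_zero,
        ← ENNReal.ofReal_add habc hcb]
      ring_nf
    have hPB : P {0, 2} = ENNReal.ofReal b := by
      rw [key {0,2} 1 0 1 0 (by simp) (by simp) (by simp) (by simp)]
      rw [mul_one, mul_one, mul_zero, mul_zero, add_zero, add_zero,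
        ← ENNReal.ofReal_add habc hca]
      ring_nf
    have hPU : P ({0, 1} ∪ {0, 2} : Set (Fin 4)) = ENNReal.ofReal c := by
      rw [key _ 1 1 1 0 (by simp) (by simp) (by simp) (by simp)]
      rw [mul_one, mul_one, mul_one, mul_zero, add_zero,
        ← ENNReal.ofReal_add habc hcb, ← ENNReal.ofReal_add (by linarith) hca]
      ring_nf
    have hPuniv : P Set.univ = 1 := by
      rw [key _ 1 1 1 1 (by simp) (by simp) (by simp) (by simp)]
      rw [mul_one, mul_one, mul_one, mul_one,
        ← ENNReal.ofReal_add habc hcb, ← ENNReal.ofReal_add (by linarith) hca,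
        ← ENNReal.ofReal_add (by linarith) h1c]
      norm_num
    refine ⟨Fin 4, inferInstance, P, ⟨hPuniv⟩, {0, 1}, {0, 2},
      (Set.finite_singleton _ |>.insert _).measurableSet,
      (Set.finite_singleton _ |>.insert _).measurableSet, ?_, ?_, ?_⟩
    · rw [hPA, ENNReal.toReal_ofReal ha0]
    · rw [hPB, ENNReal.toReal_ofReal hb0]
    · rw [hPU, ENNReal.toReal_ofReal hc0]
end

section
/- A vector (p₁, p₂, p₁∨₂) ∈ ℝ³ satisfies the inequalities 0 ≤ p₁ ≤ p₁∨₂ ≤ 1, 0 ≤ p₂ ≤ p₁∨₂ ≤ 1, and 0 ≤ p₁ + p₂ − p₁∨₂ if and only if it is a convex combination of the four vectors (0,0,0), (1,0,1), (0,1,1), (1,1,1). -/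
theorem stmt1 (p1 p2 p12 : ℝ) :
    ((0 ≤ p1 ∧ p1 ≤ p12 ∧ p12 ≤ 1) ∧ (0 ≤ p2 ∧ p2 ≤ p12 ∧ p12 ≤ 1) ∧
      0 ≤ p1 + p2 - p12) ↔
    ∃ a b c d : ℝ, 0 ≤ a ∧ 0 ≤ b ∧ 0 ≤ c ∧ 0 ≤ d ∧ a + b + c + d = 1 ∧
      ![p1, p2, p12] =
        a • ![(0:ℝ), 0, 0] + b • ![(1:ℝ), 0, 1] + c • ![(0:ℝ), 1, 1] +
          d • ![(1:ℝ), 1, 1] := by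
  constructor
  · rintro ⟨⟨h1, h2, h3⟩, ⟨h4, h5, h6⟩, h7⟩
    refine ⟨1 - p12, p12 - p2, p12 - p1, p1 + p2 - p12, by linarith, by linarith,
      by linarith, by linarith, by ring, ?_⟩
    funext i
    fin_cases i <;> simp <;> ring
  · rintro ⟨a, b, c, d, ha, hb, hc, hd, hsum, heq⟩
    have e0 := congrFun heq 0
    have e1 := congrFun heq 1
    have e2 := congrFun heq 2
    simp at e0 e1 e2
    refine ⟨⟨?_, ?_, ?_⟩, ⟨?_, ?_, ?_⟩, ?_⟩ <;> linarith
end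

section
/- Let n, S, S′ be given, with S, S′ sets of index pairs. The set of weights pᵢ (i = 1,…,n), p_{ij} ((i,j) ∈ S), p_{i∨j} ((i,j) ∈ S′) admits a probability space (Ω, σ(Ω), P) and events E₁,…,Eₙ with pᵢ = P(Eᵢ), p_{ij} = P(Eᵢ ∩ Eⱼ) for (i,j) ∈ S, and p_{i∨j} = P(Eᵢ ∪ Eⱼ) for (i,j) ∈ S′, if and only if the vector (p₁,…,pₙ, (p_{ij}), (p_{i∨j})) lies in the convex hull of the vectors w^ε for ε ∈ {0,1}ⁿ, where wᵢ^ε = εᵢ, w_{ij}^ε = εᵢεⱼ = min(εᵢ,εⱼ), and w_{k∨l}^ε = εₖ + ε_l − εₖε_l = max(εₖ,ε_l). -/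
open MeasureTheory

theorem stmt6 (n : ℕ) (S S' : Finset (Fin n × Fin n))
    (hS : ∀ q ∈ S, q.1 < q.2) (hS' : ∀ q ∈ S', q.1 < q.2)
    (p : Fin n → ℝ) (pc pd : Fin n × Fin n → ℝ) :
    (∃ (Ω : Type) (_ : MeasurableSpace Ω) (P : Measure Ω),
      IsProbabilityMeasure P ∧
      ∃ E : Fin n → Set Ω, (∀ i, MeasurableSet (E i)) ∧
        (∀ i, p i = (P (E i)).toReal) ∧
        (∀ q ∈ S, pc q = (P (E q.1 ∩ E q.2)).toReal) ∧
        (∀ q ∈ S', pd q = (P (E q.1 ∪ E q.2)).toReal)) ↔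
    (∃ lam : (Fin n → Bool) → ℝ,
      (∀ ε, 0 ≤ lam ε) ∧ (∑ ε, lam ε) = 1 ∧
      (∀ i, p i = ∑ ε, lam ε * (if ε i then 1 else 0)) ∧
      (∀ q ∈ S, pc q =
        ∑ ε, lam ε *
          min (if ε q.1 then (1:ℝ) else 0) (if ε q.2 then (1:ℝ) else 0)) ∧
      (∀ q ∈ S', pd q =
        ∑ ε, lam ε *
          max (if ε q.1 then (1:ℝ) else 0) (if ε q.2 then (1:ℝ) else 0))) := by
  constructor
  · rintro ⟨Ω, mΩ, P, hP, E, hE, hp, hpc, hpd⟩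
    classical
    set atom : (Fin n → Bool) → Set Ω := fun ε => ⋂ i, if ε i then E i else (E i)ᶜ with hatom
    have hmeas : ∀ ε, MeasurableSet (atom ε) := by
      intro ε; apply MeasurableSet.iInter; intro i
      by_cases h : ε i <;> simp [h, hE i, (hE i).compl]
    have hsubT : ∀ ε i, ε i = true → atom ε ⊆ E i := by
      intro ε i h
      have := Set.iInter_subset (fun i => if ε i then E i else (E i)ᶜ) i
      rwa [h, if_pos rfl] at this
    have hsubF : ∀ ε i, ε i = false → atom ε ⊆ (E i)ᶜ := by
      intro ε i h
      have := Set.iInter_subset (fun i => if ε i then E i else (E i)ᶜ) i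
      rw [h] at this; simpa using this
    have hdisj : Pairwise (Function.onFun Disjoint atom) := by
      intro ε ε' hne
      obtain ⟨i, hi⟩ : ∃ i, ε i ≠ ε' i := by
        by_contra h; push_neg at h; exact hne (funext h)
      apply Set.disjoint_left.2
      intro ω hω hω'
      cases hb : ε i <;> cases hb' : ε' i
      · exact hi (hb.trans hb'.symm)
      · exact hsubF ε i hb hω (hsubT ε' i hb' hω')
      · exact hsubF ε' i hb' hω' (hsubT ε i hb hω)
      · exact hi (hb.trans hb'.symm)
    have hcover : (⋃ ε, atom ε) = Set.univ := by
      ext ω; simp only [Set.mem_iUnion, Set.mem_univ, iff_true]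
      refine ⟨fun i => decide (ω ∈ E i), ?_⟩
      simp only [hatom, Set.mem_iInter]
      intro i
      by_cases h : ω ∈ E i <;> simp [h]
    have hfin : ∀ A : Set Ω, P A ≠ ⊤ := fun A => (measure_lt_top P A).ne
    have key : ∀ A : Set Ω, MeasurableSet A →
        (P A).toReal = ∑ ε, (P (A ∩ atom ε)).toReal := by
      intro A hA
      have h1 : A = ⋃ ε, A ∩ atom ε := by
        rw [← Set.inter_iUnion, hcover, Set.inter_univ]
      have h2 : P A = ∑ ε, P (A ∩ atom ε) := by
        conv_lhs => rw [h1]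
        rw [measure_iUnion (fun ε ε' hne => ((hdisj hne).inter_left' A).inter_right' A)
          (fun ε => hA.inter (hmeas ε)), tsum_fintype]
      rw [h2, ENNReal.toReal_sum (fun ε _ => hfin _)]
    -- helpers to evaluate P (A ∩ atom ε)
    have hsubEq : ∀ (A : Set Ω) (ε), atom ε ⊆ A → A ∩ atom ε = atom ε :=
      fun A ε h => Set.inter_eq_right.2 h
    have hsubEmpty : ∀ (A : Set Ω) (ε), atom ε ⊆ Aᶜ → A ∩ atom ε = ∅ := by
      intro A ε h
      rw [Set.eq_empty_iff_forall_notMem]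
      rintro ω ⟨h1, h2⟩
      exact h h2 h1
    refine ⟨fun ε => (P (atom ε)).toReal, fun ε => ENNReal.toReal_nonneg, ?_, ?_, ?_, ?_⟩
    · have := key Set.univ MeasurableSet.univ
      simp only [Set.univ_inter] at this
      rw [← this, measure_univ, ENNReal.toReal_one]
    · intro i
      rw [hp i, key (E i) (hE i)]
      apply Finset.sum_congr rfl
      intro ε _
      cases hb : ε i
      · rw [hsubEmpty _ _ (hsubF ε i hb)]
        simp
      · rw [hsubEq _ _ (hsubT ε i hb)]
        simp
    · intro q hq
      rw [hpc q hq, key _ ((hE q.1).inter (hE q.2))]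
      apply Finset.sum_congr rfl
      intro ε _
      cases hb1 : ε q.1 <;> cases hb2 : ε q.2
      · have hs : atom ε ⊆ (E q.1 ∩ E q.2)ᶜ := fun ω hω hc => hsubF ε q.1 hb1 hω hc.1
        rw [hsubEmpty _ _ hs]; simp
      · have hs : atom ε ⊆ (E q.1 ∩ E q.2)ᶜ := fun ω hω hc => hsubF ε q.1 hb1 hω hc.1
        rw [hsubEmpty _ _ hs]; simp
      · have hs : atom ε ⊆ (E q.1 ∩ E q.2)ᶜ := fun ω hω hc => hsubF ε q.2 hb2 hω hc.2
        rw [hsubEmpty _ _ hs]; simp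
      · have hs : atom ε ⊆ E q.1 ∩ E q.2 := Set.subset_inter (hsubT ε q.1 hb1) (hsubT ε q.2 hb2)
        rw [hsubEq _ _ hs]; simp
    · intro q hq
      rw [hpd q hq, key _ ((hE q.1).union (hE q.2))]
      apply Finset.sum_congr rfl
      intro ε _
      cases hb1 : ε q.1 <;> cases hb2 : ε q.2
      · have hs : atom ε ⊆ (E q.1 ∪ E q.2)ᶜ := fun ω hω hc =>
          hc.elim (hsubF ε q.1 hb1 hω) (hsubF ε q.2 hb2 hω)
        rw [hsubEmpty _ _ hs]; simp
      · have hs : atom ε ⊆ E q.1 ∪ E q.2 := fun ω hω => Or.inr (hsubT ε q.2 hb2 hω)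
        rw [hsubEq _ _ hs]; simp
      · have hs : atom ε ⊆ E q.1 ∪ E q.2 := fun ω hω => Or.inl (hsubT ε q.1 hb1 hω)
        rw [hsubEq _ _ hs]; simp
      · have hs : atom ε ⊆ E q.1 ∪ E q.2 := fun ω hω => Or.inl (hsubT ε q.1 hb1 hω)
        rw [hsubEq _ _ hs]; simp
  · rintro ⟨lam, hnn, hsum, hp, hpc, hpd⟩
    classical
    refine ⟨Fin n → Bool, inferInstance, ∑ ε, ENNReal.ofReal (lam ε) • Measure.dirac ε, ?_, ?_⟩
    · constructor
      rw [Measure.finset_sum_apply]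
      simp only [Measure.smul_apply, smul_eq_mul,
        Measure.dirac_apply' _ MeasurableSet.univ, Set.indicator_univ, Pi.one_apply, mul_one]
      rw [← ENNReal.ofReal_sum_of_nonneg (fun ε _ => hnn ε), hsum, ENNReal.ofReal_one]
    · have happ : ∀ A : Set (Fin n → Bool),
          ((∑ ε, ENNReal.ofReal (lam ε) • Measure.dirac ε : Measure (Fin n → Bool)) A).toReal
            = ∑ ε, lam ε * (if ε ∈ A then 1 else 0) := by
        intro A
        rw [Measure.finset_sum_apply]
        have hms : MeasurableSet A := (Set.to_countable A).measurableSet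
        simp only [Measure.smul_apply, smul_eq_mul, Measure.dirac_apply' _ hms]
        rw [ENNReal.toReal_sum]
        · apply Finset.sum_congr rfl
          intro ε _
          rw [ENNReal.toReal_mul, ENNReal.toReal_ofReal (hnn ε)]
          by_cases h : ε ∈ A <;>
            simp [Set.indicator, h]
        · intro ε _
          apply ENNReal.mul_ne_top ENNReal.ofReal_ne_top
          by_cases h : ε ∈ A <;> simp [Set.indicator, h]
      refine ⟨fun i => {ω | ω i = true}, fun i => (Set.to_countable _).measurableSet, ?_, ?_, ?_⟩
      · intro i
        rw [happ, hp i]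
        apply Finset.sum_congr rfl
        intro ε _
        simp [Set.mem_setOf_eq]
      · intro q hq
        rw [happ, hpc q hq]
        apply Finset.sum_congr rfl
        intro ε _
        cases hb1 : ε q.1 <;> cases hb2 : ε q.2 <;>
          simp [Set.mem_setOf_eq, hb1, hb2]
      · intro q hq
        rw [happ, hpd q hq]
        apply Finset.sum_congr rfl
        intro ε _
        cases hb1 : ε q.1 <;> cases hb2 : ε q.2 <;>
          simp [Set.mem_setOf_eq, hb1, hb2]
end

section
/- A triple (p₁, p₂, p₁∨₂) ∈ ℝ³ is a classical disjunction set of membership weights (i.e., representable as (P(E₁), P(E₂), P(E₁ ∪ E₂)) in some probability space) if and only if it lies in the convex hull of (0,0,0), (1,0,1), (0,1,1), (1,1,1). -/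
open MeasureTheory

/-- Polytope inequality description. -/
def QDisj (a b c : ℝ) : Prop :=
  0 ≤ a ∧ 0 ≤ b ∧ a ≤ c ∧ b ≤ c ∧ c ≤ 1 ∧ c ≤ a + b

lemma Q_of_hull {p1 p2 p12 : ℝ}
    (h : ![p1, p2, p12] ∈ convexHull ℝ
        ({![(0:ℝ), 0, 0], ![(1:ℝ), 0, 1], ![(0:ℝ), 1, 1], ![(1:ℝ), 1, 1]} :
          Set (Fin 3 → ℝ))) : QDisj p1 p2 p12 := by
  set S : Set (Fin 3 → ℝ) :=
    {x | 0 ≤ x 0 ∧ 0 ≤ x 1 ∧ x 0 ≤ x 2 ∧ x 1 ≤ x 2 ∧ x 2 ≤ 1 ∧ x 2 ≤ x 0 + x 1} with hS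
  have hconv : Convex ℝ S := by
    intro x hx y hy a b ha hb hab
    simp only [hS, Set.mem_setOf_eq] at hx hy ⊢
    obtain ⟨h1, h2, h3, h4, h5, h6⟩ := hx
    obtain ⟨k1, k2, k3, k4, k5, k6⟩ := hy
    simp only [Pi.add_apply, Pi.smul_apply, smul_eq_mul]
    refine ⟨by positivity, by positivity, ?_, ?_, ?_, ?_⟩ <;> nlinarith
  have hsub : ({![(0:ℝ), 0, 0], ![(1:ℝ), 0, 1], ![(0:ℝ), 1, 1], ![(1:ℝ), 1, 1]} :
      Set (Fin 3 → ℝ)) ⊆ S := by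
    intro x hx
    simp only [Set.mem_insert_iff, Set.mem_singleton_iff] at hx
    rcases hx with rfl | rfl | rfl | rfl <;> simp [hS]
  have := convexHull_min hsub hconv h
  simp only [hS, Set.mem_setOf_eq] at this
  simpa [QDisj] using this

lemma hull_of_Q {p1 p2 p12 : ℝ} (h : QDisj p1 p2 p12) :
    ![p1, p2, p12] ∈ convexHull ℝ
        ({![(0:ℝ), 0, 0], ![(1:ℝ), 0, 1], ![(0:ℝ), 1, 1], ![(1:ℝ), 1, 1]} :
          Set (Fin 3 → ℝ)) := by
  obtain ⟨h1, h2, h3, h4, h5, h6⟩ := h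
  set w : Fin 4 → ℝ := ![1 - p12, p12 - p2, p12 - p1, p1 + p2 - p12] with hw
  set z : Fin 4 → (Fin 3 → ℝ) :=
    ![![(0:ℝ), 0, 0], ![(1:ℝ), 0, 1], ![(0:ℝ), 1, 1], ![(1:ℝ), 1, 1]] with hz
  have hw0 : ∀ i ∈ Finset.univ, 0 ≤ w i := by
    intro i _
    fin_cases i <;> simp [hw] <;> linarith
  have hws : ∑ i ∈ Finset.univ, w i = 1 := by
    simp [hw, Fin.sum_univ_four]; ring
  have hmem : ∀ i ∈ Finset.univ, z i ∈
      ({![(0:ℝ), 0, 0], ![(1:ℝ), 0, 1], ![(0:ℝ), 1, 1], ![(1:ℝ), 1, 1]} :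
        Set (Fin 3 → ℝ)) := by
    intro i _
    fin_cases i <;> simp [hz]
  have := Finset.centerMass_mem_convexHull Finset.univ hw0 (by rw [hws]; norm_num) hmem
  rw [Finset.centerMass_eq_of_sum_1 _ _ hws] at this
  convert this using 1
  funext j
  simp only [Fin.sum_univ_four, hw, hz, Pi.add_apply, Pi.smul_apply, smul_eq_mul]
  fin_cases j <;>
    simp [Matrix.vecHead, Matrix.vecTail] <;> ring

lemma Q_of_classical {p1 p2 p12 : ℝ} (h : IsClassicalDisjunction p1 p2 p12) :
    QDisj p1 p2 p12 := by
  obtain ⟨Ω, m, P, hP, EA, EB, hA, hB, ha, hb, hc⟩ := h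
  have hne : ∀ s : Set Ω, P s ≠ ⊤ := fun s => measure_ne_top P s
  have mono : ∀ s t : Set Ω, s ⊆ t → (P s).toReal ≤ (P t).toReal := by
    intro s t hst
    exact ENNReal.toReal_mono (hne t) (measure_mono hst)
  refine ⟨?_, ?_, ?_, ?_, ?_, ?_⟩
  · rw [← ha]; exact ENNReal.toReal_nonneg
  · rw [← hb]; exact ENNReal.toReal_nonneg
  · rw [← ha, ← hc]; exact mono _ _ Set.subset_union_left
  · rw [← hb, ← hc]; exact mono _ _ Set.subset_union_right
  · rw [← hc]
    have := mono (EA ∪ EB) Set.univ (Set.subset_univ _)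
    simpa [measure_univ] using this
  · rw [← ha, ← hb, ← hc]
    have h1 := measure_union_le (μ := P) EA EB
    have := ENNReal.toReal_mono (by simp [ENNReal.add_ne_top, hne]) h1
    rwa [ENNReal.toReal_add (hne EA) (hne EB)] at this

lemma classical_of_Q {p1 p2 p12 : ℝ} (h : QDisj p1 p2 p12) :
    IsClassicalDisjunction p1 p2 p12 := by
  obtain ⟨h1, h2, h3, h4, h5, h6⟩ := h
  refine ⟨Fin 4, ⊤, ENNReal.ofReal (1 - p12) • Measure.dirac 0
    + ENNReal.ofReal (p12 - p2) • Measure.dirac 1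
    + ENNReal.ofReal (p12 - p1) • Measure.dirac 2
    + ENNReal.ofReal (p1 + p2 - p12) • Measure.dirac 3, ?_,
    {1, 3}, {2, 3}, trivial, trivial, ?_, ?_, ?_⟩
  · constructor
    simp only [Measure.add_apply, Measure.smul_apply, Measure.dirac_apply_of_mem
      (Set.mem_univ _), smul_eq_mul, mul_one]
    rw [← ENNReal.ofReal_add (by linarith) (by linarith),
        ← ENNReal.ofReal_add (by linarith) (by linarith),
        ← ENNReal.ofReal_add (by linarith) (by linarith)]
    rw [show 1 - p12 + (p12 - p2) + (p12 - p1) + (p1 + p2 - p12) = (1:ℝ) by ring]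
    exact ENNReal.ofReal_one
  · have hm : ∀ s : Set (Fin 4), MeasurableSet[⊤] s := fun _ => trivial
    simp only [Measure.add_apply, Measure.smul_apply, smul_eq_mul,
      Measure.dirac_apply' _ (hm _)]
    simp [Set.indicator_apply]
    rw [← ENNReal.ofReal_add (by linarith) (by linarith), ENNReal.toReal_ofReal (by linarith)]
    ring
  · have hm : ∀ s : Set (Fin 4), MeasurableSet[⊤] s := fun _ => trivial
    simp only [Measure.add_apply, Measure.smul_apply, smul_eq_mul,
      Measure.dirac_apply' _ (hm _)]
    simp [Set.indicator_apply]
    rw [← ENNReal.ofReal_add (by linarith) (by linarith), ENNReal.toReal_ofReal (by linarith)]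
    ring
  · have hm : ∀ s : Set (Fin 4), MeasurableSet[⊤] s := fun _ => trivial
    have hu : ({1, 3} ∪ {2, 3} : Set (Fin 4)) = {1, 2, 3} := by
      ext x; simp [or_comm, or_assoc, or_left_comm]
    rw [hu]
    simp only [Measure.add_apply, Measure.smul_apply, smul_eq_mul,
      Measure.dirac_apply' _ (hm _)]
    simp [Set.indicator_apply]
    rw [← ENNReal.ofReal_add (by linarith) (by linarith),
        ← ENNReal.ofReal_add (by linarith) (by linarith),
        ENNReal.toReal_ofReal (by linarith)]
    ring

theorem stmt14 (p1 p2 p12 : ℝ) :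
    IsClassicalDisjunction p1 p2 p12 ↔
      ![p1, p2, p12] ∈ convexHull ℝ
        ({![(0:ℝ), 0, 0], ![(1:ℝ), 0, 1], ![(0:ℝ), 1, 1], ![(1:ℝ), 1, 1]} :
          Set (Fin 3 → ℝ)) := by
  exact ⟨fun h => hull_of_Q (Q_of_classical h), fun h => classical_of_Q (Q_of_hull h)⟩
end
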